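/- Fix N ≥ 2 and let i denote the imaginary unit. Define operators on smooth functions f : ℝ^N → ℂ by (p_m f)(x) = −i·∂f/∂x_m(x) and (a_m f)(x) = e^{x_m}·f(x), 1 ≤ m ≤ N (these map smooth functions to smooth functions and satisfy [p_m, a_k] = −i δ_{mk} a_k). For u ∈ ℂ let L_m(u) be the 2×2 matrix of such operators with rows (u·Id − p_m, −a_m) and (a_m^{−1}, 0), and define A_n(u), B_n(u), C_n(u), D_n(u) as the entries of the product T_n(u) = L_n(u)⋯L_1(u) (compositions of operators). Let λ_1,…,λ_{N−1}, P ∈ ℂ and suppose ψ : ℝ^N → ℂ is smooth, does not depend on x_N, and satisfies A_{N−1}(u)ψ = (∏_{j=1}^{N−1}(u − λ_j))·ψ for every u ∈ ℂ. Define Ψ(x) = exp(i·(P − ∑_{m=1}^{N−1} λ_m)·x_N)·ψ(x). Then for every u ∈ ℂ: C_N(u)Ψ = e^{−x_N}·(∏_{j=1}^{N−1}(u − λ_j))·Ψ, and moreover (p_1 + ⋯ + p_N)Ψ = P·Ψ. -/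

import Mathlib

noncomputable section

open Finset

/-- Operators acting on functions `ℝ^N → ℂ`. -/
abbrev Op (N : ℕ) := ((Fin N → ℝ) → ℂ) → ((Fin N → ℝ) → ℂ)

/-- Momentum operator `p_m = −i ∂/∂x_m`. -/
def pOp {N : ℕ} (m : Fin N) : Op N := fun f x => -Complex.I * fderiv ℝ f x (Pi.single m 1)

/-- Position operator `a_m = e^{x_m}·`. -/
def aOp {N : ℕ} (m : Fin N) : Op N := fun f x => (Real.exp (x m) : ℂ) * f x

/-- Inverse position operator `a_m⁻¹ = e^{−x_m}·`. -/
def aInvOp {N : ℕ} (m : Fin N) : Op N := fun f x => (Real.exp (-(x m)) : ℂ) * f x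

/-- Entrywise product of `2×2` matrices of operators (operator composition and
pointwise sums). -/
def opMatMul {N : ℕ} (M K : Matrix (Fin 2) (Fin 2) (Op N)) :
    Matrix (Fin 2) (Fin 2) (Op N) :=
  Matrix.of fun i j => fun f x => ∑ k : Fin 2, M i k (K k j f) x

/-- The local quantum Lax matrix `L_m(u)` of the open Toda lattice, as a `2×2` matrix of
operators. -/
def Lop {N : ℕ} (m : Fin N) (u : ℂ) : Matrix (Fin 2) (Fin 2) (Op N) :=
  !![fun f x => u * f x - pOp m f x, fun f x => -(aOp m f x);
     aInvOp m, fun _ _ => 0]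

/-- Partial monodromy matrices `T_n(u) = L_n(u) ⋯ L_1(u)` (`T_0 = Id`). -/
def Tmat (N : ℕ) (u : ℂ) : ℕ → Matrix (Fin 2) (Fin 2) (Op N)
  | 0 => !![fun f => f, fun _ _ => 0; fun _ _ => 0, fun f => f]
  | n + 1 =>
    if h : n < N then opMatMul (Lop ⟨n, h⟩ u) (Tmat N u n) else Tmat N u n

lemma pOp_smooth {N : ℕ} (m : Fin N) {f : (Fin N → ℝ) → ℂ} (hf : ContDiff ℝ (⊤ : ℕ∞) f) :
    ContDiff ℝ (⊤ : ℕ∞) (pOp m f) :=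
  contDiff_const.mul ((hf.fderiv_right (by simp)).clm_apply contDiff_const)

lemma expC_smooth {N : ℕ} (c : ℂ) (j : Fin N) :
    ContDiff ℝ (⊤ : ℕ∞) (fun x : Fin N → ℝ => Complex.exp (c * (x j : ℝ))) :=
  ContDiff.cexp (contDiff_const.mul (Complex.ofRealCLM.contDiff.comp (contDiff_apply ℝ ℝ j)))

lemma expR_smooth {N : ℕ} (m : Fin N) :
    ContDiff ℝ (⊤ : ℕ∞) (fun x : Fin N → ℝ => ((Real.exp (x m) : ℝ) : ℂ)) :=
  Complex.ofRealCLM.contDiff.comp (Real.contDiff_exp.comp (contDiff_apply ℝ ℝ m))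

lemma expRneg_smooth {N : ℕ} (m : Fin N) :
    ContDiff ℝ (⊤ : ℕ∞) (fun x : Fin N → ℝ => ((Real.exp (-(x m)) : ℝ) : ℂ)) :=
  Complex.ofRealCLM.contDiff.comp (Real.contDiff_exp.comp (contDiff_apply ℝ ℝ m).neg)

lemma Tmat_succ_00 {N : ℕ} (u : ℂ) (n : ℕ) (h : n < N) (f : (Fin N → ℝ) → ℂ) (x : Fin N → ℝ) :
    Tmat N u (n+1) 0 0 f x
      = u * Tmat N u n 0 0 f x - pOp ⟨n,h⟩ (Tmat N u n 0 0 f) x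
        - aOp ⟨n,h⟩ (Tmat N u n 1 0 f) x := by
  simp [Tmat, h, opMatMul, Lop, Fin.sum_univ_two]
  ring

lemma Tmat_succ_10 {N : ℕ} (u : ℂ) (n : ℕ) (h : n < N) (f : (Fin N → ℝ) → ℂ) (x : Fin N → ℝ) :
    Tmat N u (n+1) 1 0 f x = aInvOp ⟨n,h⟩ (Tmat N u n 0 0 f) x := by
  simp [Tmat, h, opMatMul, Lop, Fin.sum_univ_two]

lemma pOp_zero {N : ℕ} (m : Fin N) (x : Fin N → ℝ) :
    pOp m (0 : (Fin N → ℝ) → ℂ) x = 0 := by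
  unfold pOp
  rw [show (0 : (Fin N → ℝ) → ℂ) = fun _ => (0:ℂ) from rfl, fderiv_fun_const]
  simp

lemma pOp_finsum {N : ℕ} (m : Fin N) (r : ℕ) (u : ℂ) (c : ℕ → (Fin N → ℝ) → ℂ)
    (hc : ∀ k, Differentiable ℝ (c k)) (x : Fin N → ℝ) :
    pOp m (fun y => ∑ k ∈ Finset.range r, u^k * c k y) x
      = ∑ k ∈ Finset.range r, u^k * pOp m (c k) x := by
  unfold pOp
  rw [fderiv_fun_sum (fun i _ => (hc i x).const_mul (u^i))]
  rw [ContinuousLinearMap.sum_apply, Finset.mul_sum]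
  refine Finset.sum_congr rfl fun k _ => ?_
  rw [fderiv_const_mul (hc k x) (u^k)]
  simp [ContinuousLinearMap.smul_apply]
  ring

lemma fderiv_expC {N : ℕ} (c : ℂ) (j : Fin N) (x : Fin N → ℝ) (v : Fin N → ℝ) :
    fderiv ℝ (fun x : Fin N → ℝ => Complex.exp (c * (x j : ℝ))) x v
      = c * Complex.exp (c * (x j : ℝ)) * (v j : ℝ) := by
  have h1 : HasFDerivAt (fun x : Fin N → ℝ => ((x j : ℝ) : ℂ))
      (Complex.ofRealCLM.comp (ContinuousLinearMap.proj j)) x :=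
    (Complex.ofRealCLM.comp (ContinuousLinearMap.proj (R := ℝ) (φ := fun _ : Fin N => ℝ) j)).hasFDerivAt
  have h2 := (h1.const_mul c).cexp
  rw [h2.fderiv]
  simp [ContinuousLinearMap.smul_apply]
  ring

lemma pOp_mul_exp {N : ℕ} (κ : ℂ) (j m : Fin N) (hm : m ≠ j) (h : (Fin N → ℝ) → ℂ)
    (x : Fin N → ℝ) (hh : DifferentiableAt ℝ h x) :
    pOp m (fun y => Complex.exp (κ * (y j : ℝ)) * h y) x
      = Complex.exp (κ * (x j : ℝ)) * pOp m h x := by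
  unfold pOp
  have hg : DifferentiableAt ℝ (fun y : Fin N → ℝ => Complex.exp (κ * (y j : ℝ))) x :=
    ((expC_smooth κ j).differentiable (by simp)).differentiableAt
  rw [fderiv_fun_mul hg hh]
  have hv : fderiv ℝ (fun y : Fin N → ℝ => Complex.exp (κ * (y j : ℝ))) x (Pi.single m 1)
      = 0 := by
    rw [fderiv_expC]
    rw [Pi.single_eq_of_ne (Ne.symm hm)]
    simp
  simp [ContinuousLinearMap.add_apply, ContinuousLinearMap.smul_apply, hv]
  ring

lemma fderiv_indep {N : ℕ} (ψ : (Fin N → ℝ) → ℂ) (hψ : Differentiable ℝ ψ) (j : Fin N)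
    (hindep : ∀ (x : Fin N → ℝ) (c : ℝ), ψ (Function.update x j c) = ψ x) (x : Fin N → ℝ) :
    fderiv ℝ ψ x (Pi.single j 1) = 0 := by
  have hγ : HasDerivAt (fun t : ℝ => x + t • (Pi.single j 1 : Fin N → ℝ)) (Pi.single j 1) 0 := by
    simpa using ((hasDerivAt_id (0:ℝ)).smul_const (Pi.single j 1 : Fin N → ℝ)).const_add x
  have hc : HasDerivAt (fun t : ℝ => ψ (x + t • (Pi.single j 1 : Fin N → ℝ)))
      (fderiv ℝ ψ x (Pi.single j 1)) 0 := by
    have h := HasFDerivAt.comp_hasDerivAt 0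
      ((hψ (x + (0:ℝ) • (Pi.single j 1 : Fin N → ℝ))).hasFDerivAt) hγ
    simpa [Function.comp_def] using h
  have heq : (fun t : ℝ => ψ (x + t • (Pi.single j 1 : Fin N → ℝ))) = fun _ => ψ x := by
    funext t
    have : x + t • (Pi.single j 1 : Fin N → ℝ) = Function.update x j (x j + t) := by
      funext k
      by_cases hk : k = j
      · subst hk; simp
      · simp [hk, Pi.single_eq_of_ne hk, Function.update_of_ne hk]
    rw [this, hindep]
  rw [heq] at hc
  exact hc.unique (hasDerivAt_const 0 (ψ x))


lemma key_induction (N : ℕ) (hN : 2 ≤ N) (ψ : (Fin N → ℝ) → ℂ) (hsmooth : ContDiff ℝ (⊤ : ℕ∞) ψ)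
    (κ : ℂ) :
    ∀ n, n ≤ N - 1 →
      ∃ c d : ℕ → ((Fin N → ℝ) → ℂ),
        (∀ k, ContDiff ℝ (⊤ : ℕ∞) (c k)) ∧ (∀ k, ContDiff ℝ (⊤ : ℕ∞) (d k)) ∧
        (∀ k, n < k → c k = 0) ∧ (∀ k, n ≤ k → d k = 0) ∧
        (∀ u x, Tmat N u n 0 0 ψ x = ∑ k ∈ Finset.range (n+1), u^k * c k x) ∧
        (∀ u x, Tmat N u n 1 0 ψ x = ∑ k ∈ Finset.range (n+1), u^k * d k x) ∧
        c n = ψ ∧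
        (1 ≤ n → ∀ x, c (n-1) x
          = -∑ m ∈ Finset.univ.filter (fun m : Fin N => (m:ℕ) < n), pOp m ψ x) ∧
        (∀ u x, Tmat N u n 0 0 (fun y => Complex.exp (κ * (y ⟨N-1, (by omega : N - 1 < N + 0)⟩ : ℝ)) * ψ y) x
            = Complex.exp (κ * (x ⟨N-1, (by omega : N - 1 < N + 0)⟩ : ℝ)) * Tmat N u n 0 0 ψ x) ∧
        (∀ u x, Tmat N u n 1 0 (fun y => Complex.exp (κ * (y ⟨N-1, (by omega : N - 1 < N + 0)⟩ : ℝ)) * ψ y) x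
            = Complex.exp (κ * (x ⟨N-1, (by omega : N - 1 < N + 0)⟩ : ℝ)) * Tmat N u n 1 0 ψ x) := by
  set j : Fin N := ⟨N-1, (by omega : N - 1 < N + 0)⟩ with hj
  intro n
  induction n with
  | zero =>
    intro _
    refine ⟨fun k => if k = 0 then ψ else 0, fun _ => 0, ?_, ?_, ?_, ?_, ?_, ?_, ?_, ?_, ?_, ?_⟩
    · intro k
      by_cases hk : k = 0
      · simpa [hk] using hsmooth
      · simp only [hk, if_false]; exact contDiff_const
    · intro k; exact contDiff_const
    · intro k hk
      have hk0 : ¬ k = 0 := by omega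
      simp only [hk0, if_false]
    · intro k _; rfl
    · intro u x; simp [Tmat]
    · intro u x; simp [Tmat]
    · simp
    · intro h; omega
    · intro u x; simp [Tmat]
    · intro u x; simp [Tmat]
  | succ n ih =>
    intro hn1
    obtain ⟨c, d, hcs, hds, hcv, hdv, rep00, rep10, hctop, hcsub, comm00, comm10⟩ :=
      ih (by omega)
    have hnN : n < N := by omega
    set m : Fin N := ⟨n, hnN⟩ with hmdef
    have hmj : m ≠ j := by
      simp only [hmdef, hj, Fin.mk.injEq, Ne]
      omega
    -- differentiability of the coefficient functions
    have hcd : ∀ k, Differentiable ℝ (c k) := fun k => (hcs k).differentiable (by simp)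
    -- the new coefficients
    set c' : ℕ → ((Fin N → ℝ) → ℂ) := fun k x =>
      (if k = 0 then 0 else c (k-1) x) - pOp m (c k) x - (Real.exp (x m) : ℂ) * d k x
      with hc'def
    set d' : ℕ → ((Fin N → ℝ) → ℂ) := fun k x => (Real.exp (-(x m)) : ℂ) * c k x with hd'def
    -- T_{n+1} 0 0 ψ as a function of x, for fixed u
    have hT00fun : ∀ u : ℂ, Tmat N u n 0 0 ψ = fun y => ∑ k ∈ Finset.range (n+1), u^k * c k y :=
      fun u => funext (rep00 u)
    have hT00diff : ∀ u : ℂ, Differentiable ℝ (Tmat N u n 0 0 ψ) := by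
      intro u
      rw [hT00fun u]
      exact Differentiable.fun_sum fun k _ => (hcd k).const_mul _
    have key00 : ∀ u x, Tmat N u (n+1) 0 0 ψ x
        = ∑ k ∈ Finset.range (n+2), u^k * c' k x := by
      intro u x
      rw [Tmat_succ_00 u n hnN]
      simp only [aOp]
      have hp : pOp m (Tmat N u n 0 0 ψ) x = ∑ k ∈ Finset.range (n+1), u^k * pOp m (c k) x := by
        rw [hT00fun u]; exact pOp_finsum m (n+1) u c hcd x
      rw [rep00 u x, hp, rep10 u x]
      have e1 : ∑ k ∈ Finset.range (n+2), u^k * c' k x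
          = (∑ k ∈ Finset.range (n+2), u^k * (if k = 0 then 0 else c (k-1) x))
            - (∑ k ∈ Finset.range (n+2), u^k * pOp m (c k) x)
            - (∑ k ∈ Finset.range (n+2), u^k * ((Real.exp (x m) : ℂ) * d k x)) := by
        rw [← Finset.sum_sub_distrib, ← Finset.sum_sub_distrib]
        refine Finset.sum_congr rfl fun k _ => ?_
        simp only [hc'def]
        ring
      rw [e1]
      have e2 : ∑ k ∈ Finset.range (n+2), u^k * (if k = 0 then 0 else c (k-1) x)
          = u * ∑ k ∈ Finset.range (n+1), u^k * c k x := by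
        rw [Finset.sum_range_succ' (fun k => u^k * (if k = 0 then 0 else c (k-1) x)) (n+1)]
        norm_num
        rw [Finset.mul_sum]
        exact Finset.sum_congr rfl fun k _ => by ring
      have e3 : ∑ k ∈ Finset.range (n+2), u^k * pOp m (c k) x
          = ∑ k ∈ Finset.range (n+1), u^k * pOp m (c k) x := by
        rw [Finset.sum_range_succ, hcv (n+1) (by omega), pOp_zero, mul_zero, add_zero]
      have e4 : ∑ k ∈ Finset.range (n+2), u^k * ((Real.exp (x m) : ℂ) * d k x)
          = (Real.exp (x m) : ℂ) * ∑ k ∈ Finset.range (n+1), u^k * d k x := by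
        rw [Finset.sum_range_succ, hdv (n+1) (by omega)]
        simp only [Pi.zero_apply, mul_zero, add_zero, Finset.mul_sum]
        exact Finset.sum_congr rfl fun k _ => by ring
      rw [e2, e3, e4]
    have key10 : ∀ u x, Tmat N u (n+1) 1 0 ψ x
        = ∑ k ∈ Finset.range (n+2), u^k * d' k x := by
      intro u x
      rw [Tmat_succ_10 u n hnN]
      simp only [aInvOp]
      rw [rep00 u x, Finset.mul_sum]
      rw [Finset.sum_range_succ (fun k => u^k * d' k x) (n+1)]
      simp only [hd'def, hcv (n+1) (by omega), Pi.zero_apply, mul_zero, add_zero]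
      refine Finset.sum_congr rfl fun k _ => ?_
      ring
    refine ⟨c', d', ?_, ?_, ?_, ?_, key00, key10, ?_, ?_, ?_, ?_⟩
    · -- smoothness of c'
      intro k
      have h1 : ContDiff ℝ (⊤ : ℕ∞) (fun x : Fin N → ℝ => (if k = 0 then 0 else c (k-1) x)) := by
        by_cases hk : k = 0 <;> simp [hk, hcs, contDiff_const]
      exact (h1.sub (pOp_smooth m (hcs k))).sub ((expR_smooth m).mul (hds k))
    · intro k
      exact (expRneg_smooth m).mul (hcs k)
    · -- vanishing of c'
      intro k hk
      funext x
      have h1 : c (k-1) = 0 := hcv (k-1) (by omega)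
      have h2 : c k = 0 := hcv k (by omega)
      have h3 : d k = 0 := hdv k (by omega)
      simp [hc'def, h1, h2, h3, pOp_zero, (by omega : ¬ k = 0)]
    · -- vanishing of d'
      intro k hk
      funext x
      have h2 : c k = 0 := hcv k (by omega)
      simp [hd'def, h2]
    · -- leading coefficient
      funext x
      have h2 : c (n+1) = 0 := hcv (n+1) (by omega)
      have h3 : d (n+1) = 0 := hdv (n+1) (by omega)
      simp [hc'def, h2, h3, pOp_zero, hctop]
    · -- subleading coefficient
      intro _ x
      simp only [Nat.add_sub_cancel]
      have hd_n : d n = 0 := hdv n le_rfl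
      have hfilter : Finset.univ.filter (fun m' : Fin N => (m':ℕ) < n+1)
          = insert m (Finset.univ.filter (fun m' : Fin N => (m':ℕ) < n)) := by
        ext m'
        simp only [Finset.mem_filter, Finset.mem_univ, true_and, Finset.mem_insert, hmdef,
          Fin.ext_iff]
        omega
      have hmnot : m ∉ Finset.univ.filter (fun m' : Fin N => (m':ℕ) < n) := by
        simp [hmdef]
      rw [hfilter, Finset.sum_insert hmnot]
      have hold : (if n = 0 then 0 else c (n-1) x)
          = -∑ m' ∈ Finset.univ.filter (fun m' : Fin N => (m':ℕ) < n), pOp m' ψ x := by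
        rcases Nat.eq_zero_or_pos n with h0 | h0
        · subst h0
          simp
        · rw [if_neg (by omega), hcsub h0 x]
      simp only [hc'def, hold, hd_n, Pi.zero_apply, mul_zero, sub_zero, hctop]
      ring
    · -- commutation for (0,0)
      intro u x
      rw [Tmat_succ_00 u n hnN, Tmat_succ_00 u n hnN]
      have hfeq : Tmat N u n 0 0 (fun y => Complex.exp (κ * (y j : ℝ)) * ψ y)
          = fun y => Complex.exp (κ * (y j : ℝ)) * Tmat N u n 0 0 ψ y :=
        funext (comm00 u)
      have hfeq1 : Tmat N u n 1 0 (fun y => Complex.exp (κ * (y j : ℝ)) * ψ y)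
          = fun y => Complex.exp (κ * (y j : ℝ)) * Tmat N u n 1 0 ψ y :=
        funext (comm10 u)
      rw [hfeq, hfeq1]
      have hp : pOp m (fun y => Complex.exp (κ * (y j : ℝ)) * Tmat N u n 0 0 ψ y) x
          = Complex.exp (κ * (x j : ℝ)) * pOp m (Tmat N u n 0 0 ψ) x :=
        pOp_mul_exp κ j m hmj _ x ((hT00diff u) x)
      rw [hp]
      simp only [aOp]
      ring
    · -- commutation for (1,0)
      intro u x
      rw [Tmat_succ_10 u n hnN, Tmat_succ_10 u n hnN]
      have hfeq : Tmat N u n 0 0 (fun y => Complex.exp (κ * (y j : ℝ)) * ψ y)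
          = fun y => Complex.exp (κ * (y j : ℝ)) * Tmat N u n 0 0 ψ y :=
        funext (comm00 u)
      rw [hfeq]
      simp only [aInvOp]
      ring

/-- Quantum separation of variables, recursive step: if `ψ` is a common eigenfunction
of the family `A_{N−1}(u)` with eigenvalue polynomial `∏_j (u − λ_j)`, then
`Ψ(x) = exp(i(P − ∑λ_m)x_N)·ψ(x)` diagonalizes the pencil `C_N(u)` with eigenvalue
`e^{−x_N}·∏_j (u − λ_j)`, and `Ψ` has total momentum `P`. -/
theorem toda_separation_recursive_step
    (N : ℕ) (hN : 2 ≤ N) (lam : Fin (N - 1) → ℂ) (P : ℂ)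
    (ψ : (Fin N → ℝ) → ℂ) (hsmooth : ContDiff ℝ (⊤ : ℕ∞) ψ)
    (hindep : ∀ (x : Fin N → ℝ) (c : ℝ), ψ (Function.update x ⟨N - 1, by omega⟩ c) = ψ x)
    (heig : ∀ (u : ℂ) (x : Fin N → ℝ),
      Tmat N u (N - 1) 0 0 ψ x = (∏ j : Fin (N - 1), (u - lam j)) * ψ x)
    (Ψ : (Fin N → ℝ) → ℂ)
    (hΨ : Ψ = fun x => Complex.exp (Complex.I * (P - ∑ j : Fin (N - 1), lam j) *
        (x ⟨N - 1, by omega⟩ : ℝ)) * ψ x) :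
    (∀ (u : ℂ) (x : Fin N → ℝ),
        Tmat N u N 1 0 Ψ x
          = (Real.exp (-(x ⟨N - 1, by omega⟩)) : ℂ) * (∏ j : Fin (N - 1), (u - lam j)) * Ψ x) ∧
    (∀ x : Fin N → ℝ, ∑ m : Fin N, pOp m Ψ x = P * Ψ x) := by
  have hj' : N - 1 < N := by omega
  set j : Fin N := ⟨N - 1, hj'⟩ with hjdef
  set κ : ℂ := Complex.I * (P - ∑ i : Fin (N - 1), lam i) with hκ
  have hΨ' : Ψ = fun x => Complex.exp (κ * (x j : ℝ)) * ψ x := hΨ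
  obtain ⟨c, d, hcs, hds, hcv, hdv, rep00, rep10, hctop, hcsub, comm00, comm10⟩ :=
    key_induction N hN ψ hsmooth κ (N-1) le_rfl
  have hn1 : 1 ≤ N - 1 := by omega
  -- Step A : the eigenvalue identity for the subleading coefficient
  have stepA : ∀ x, ∑ m ∈ Finset.univ.filter (fun m : Fin N => (m:ℕ) < N-1), pOp m ψ x
      = (∑ i : Fin (N-1), lam i) * ψ x := by
    intro x
    set p : Polynomial ℂ := ∑ k ∈ Finset.range (N-1+1), Polynomial.C (c k x) * Polynomial.X^k
      with hp
    set q : Polynomial ℂ := Polynomial.C (ψ x)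
      * ∏ i : Fin (N-1), (Polynomial.X - Polynomial.C (lam i)) with hq
    have heval : ∀ u : ℂ, p.eval u = q.eval u := by
      intro u
      have h1 : p.eval u = ∑ k ∈ Finset.range (N-1+1), u^k * c k x := by
        simp [hp, Polynomial.eval_finset_sum]
        exact Finset.sum_congr rfl fun k _ => by ring
      have h2 : q.eval u = (∏ i : Fin (N-1), (u - lam i)) * ψ x := by
        simp [hq, Polynomial.eval_prod]
        ring
      rw [h1, h2, ← rep00 u x, ← heig u x]
    have hpq : p = q := Polynomial.funext heval
    have hcoeffp : p.coeff (N-1-1) = c (N-1-1) x := by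
      rw [hp, Polynomial.finset_sum_coeff]
      have : ∀ k ∈ Finset.range (N-1+1),
          (Polynomial.C (c k x) * Polynomial.X^k).coeff (N-1-1)
            = if k = N-1-1 then c k x else 0 := by
        intro k _
        rw [Polynomial.coeff_C_mul, Polynomial.coeff_X_pow]
        by_cases hk : k = N-1-1
        · simp [hk]
        · simp [hk, Ne.symm hk]
      rw [Finset.sum_congr rfl this, Finset.sum_ite_eq' (Finset.range (N-1+1)) (N-1-1)]
      simp [Finset.mem_range]
    have hQnd : (∏ i : Fin (N-1), (Polynomial.X - Polynomial.C (lam i))).natDegree = N-1 := by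
      rw [Polynomial.natDegree_prod_of_monic _ _ (fun i _ => Polynomial.monic_X_sub_C (lam i))]
      simp
    have hcoeffq : q.coeff (N-1-1) = ψ x * (-(∑ i : Fin (N-1), lam i)) := by
      rw [hq, Polynomial.coeff_C_mul]
      congr 1
      have hpos : 0 < (∏ i : Fin (N-1), (Polynomial.X - Polynomial.C (lam i))).natDegree := by
        rw [hQnd]; omega
      have hnc := Polynomial.nextCoeff_of_natDegree_pos hpos
      rw [hQnd] at hnc
      rw [← hnc, Polynomial.prod_X_sub_C_nextCoeff]
    have hfin := hcsub hn1 x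
    rw [← hcoeffp, hpq, hcoeffq] at hfin
    linear_combination hfin
  -- momentum of Ψ in the j-direction
  have hpj : ∀ x, pOp j Ψ x = (P - ∑ i : Fin (N-1), lam i) * Ψ x := by
    intro x
    rw [hΨ']
    unfold pOp
    have hg : DifferentiableAt ℝ (fun y : Fin N → ℝ => Complex.exp (κ * (y j : ℝ))) x :=
      ((expC_smooth κ j).differentiable (by simp)).differentiableAt
    have hψd : DifferentiableAt ℝ ψ x := (hsmooth.differentiable (by simp)).differentiableAt
    rw [fderiv_fun_mul hg hψd]
    have h1 : fderiv ℝ ψ x (Pi.single j 1) = 0 :=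
      fderiv_indep ψ (hsmooth.differentiable (by simp)) j hindep x
    have h2 : fderiv ℝ (fun y : Fin N → ℝ => Complex.exp (κ * (y j : ℝ))) x (Pi.single j 1)
        = κ * Complex.exp (κ * (x j : ℝ)) := by
      rw [fderiv_expC]
      simp
    simp only [ContinuousLinearMap.add_apply, ContinuousLinearMap.smul_apply, h1, h2,
      smul_eq_mul, mul_zero, zero_add]
    rw [hκ]
    have : Complex.I * Complex.I = -1 := Complex.I_mul_I
    ring_nf
    rw [Complex.I_sq]
    ring
  constructor
  · -- the C_N(u) eigenvalue equation
    intro u x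
    have hTN : Tmat N u N = Tmat N u ((N-1)+1) := congrArg (Tmat N u) (by omega)
    rw [hTN, Tmat_succ_10 u (N-1) hj']
    have hcomm := comm00 u x
    rw [← hΨ'] at hcomm
    simp only [aInvOp]
    rw [hcomm, heig u x, hΨ']
    ring
  · -- total momentum
    intro x
    have hsplit : (Finset.univ : Finset (Fin N))
        = insert j (Finset.univ.filter (fun m : Fin N => (m:ℕ) < N-1)) := by
      ext m'
      simp only [Finset.mem_insert, Finset.mem_filter, Finset.mem_univ, true_and, true_iff]
      by_cases h : (m':ℕ) = N - 1
      · exact Or.inl (Fin.ext h)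
      · have := m'.isLt
        exact Or.inr (by omega)
    have hjnot : j ∉ Finset.univ.filter (fun m : Fin N => (m:ℕ) < N-1) := by
      simp [hjdef]
    rw [hsplit, Finset.sum_insert hjnot]
    have hrest : ∀ m ∈ Finset.univ.filter (fun m : Fin N => (m:ℕ) < N-1),
        pOp m Ψ x = Complex.exp (κ * (x j : ℝ)) * pOp m ψ x := by
      intro m hm
      rw [hΨ']
      refine pOp_mul_exp κ j m ?_ ψ x (hsmooth.differentiable (by simp)).differentiableAt
      simp only [Finset.mem_filter] at hm
      simp only [hjdef, Ne, Fin.ext_iff]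
      omega
    rw [Finset.sum_congr rfl hrest, ← Finset.mul_sum, stepA x, hpj x, hΨ']
    ring
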